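/- The integral from 0 to 1 of B_1(z)³·B_3(z) dz equals (3/4)·B_1²·B_4 + (1/20)·B_6 − (1/8)·B_4. -/

import Mathlib

/-- The `k`-th Bernoulli polynomial evaluated at a real `x`. -/
noncomputable def B (k : ℕ) (x : ℝ) : ℝ :=
  Polynomial.aeval x (Polynomial.bernoulli k)

/-!
Substituting `u = z - 1/2` centres both polynomials: `B₁(z) = u` and `B₃(z) = u³ - u/4`, so the
integral becomes `∫_{-1/2}^{1/2} (u⁶ - u⁴/4) du = -1/1120`. With `B₁ = -1/2`, `B₄ = -1/30` and
`B₆ = 1/42` the right-hand side evaluates to the same number.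
-/

lemma B_eq_bernoulliFun : B = bernoulliFun := by
  ext k x
  rw [B, bernoulliFun, Polynomial.eval_map_algebraMap]

lemma bernoulli_three : bernoulli 3 = 0 := by
  rw [bernoulli_eq_bernoulli'_of_ne_one (by norm_num), bernoulli'_three]

lemma bernoulli_four : bernoulli 4 = -1 / 30 := by
  rw [bernoulli_eq_bernoulli'_of_ne_one (by norm_num), bernoulli'_four]

lemma bernoulli'_five : bernoulli' 5 = 0 := by
  rw [bernoulli'_def]
  norm_num [Finset.sum_range_succ, Nat.choose]

lemma bernoulli_six : bernoulli 6 = 1 / 42 := by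
  rw [bernoulli_eq_bernoulli'_of_ne_one (by norm_num), bernoulli'_def]
  norm_num [Finset.sum_range_succ, bernoulli'_five, Nat.choose]

lemma bernoulliFun_three (x : ℝ) :
    bernoulliFun 3 x = (x - 1 / 2) ^ 3 - (x - 1 / 2) / 4 := by
  simp only [bernoulliFun, Polynomial.bernoulli_def, Finset.sum_range_succ, Finset.sum_range_zero,
    Polynomial.map_add, Polynomial.map_monomial, Polynomial.eval_add, Polynomial.eval_monomial]
  norm_num [bernoulli_three]
  ring

theorem integral_B1_cubed_B3 :
    ∫ z in (0:ℝ)..1, (B 1 z) ^ 3 * B 3 z =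
      (3 / 4) * (B 1 0) ^ 2 * B 4 0 + (1 / 20) * B 6 0 - (1 / 8) * B 4 0 := by
  simp only [B_eq_bernoulliFun, bernoulliFun_eval_zero, bernoulliFun_one, bernoulliFun_three]
  calc ∫ z in (0:ℝ)..1, (z - 1 / 2) ^ 3 * ((z - 1 / 2) ^ 3 - (z - 1 / 2) / 4)
      = ∫ u in (0 - 1 / 2 : ℝ)..(1 - 1 / 2), (u ^ 6 - u ^ 4 / 4) := by
        rw [← intervalIntegral.integral_comp_sub_right]
        ring_nf
    _ = -1 / 1120 := by
        rw [intervalIntegral.integral_sub, intervalIntegral.integral_div, integral_pow, integral_pow]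
        · norm_num
        all_goals exact (by fun_prop : Continuous _).intervalIntegrable _ _
    _ = _ := by
        rw [bernoulli_one, bernoulli_four, bernoulli_six]
        norm_num
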